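/- (Cancellation in the boundary variational term.) Let n ≥ 3 be an integer, ℓ > 0, β ∈ ℝ. Let m : (−ε,ε) → ℝ and φ : (a,b) × (−ε,ε) → (0,∞) be differentiable, set f(x,s) = β − 2m(s)/φ(x,s)^{n−2} − φ(x,s)²/ℓ², and assume f > 0 and ∂ₓφ = φ·√f everywhere (with ∂ₓ∂ₛφ = ∂ₛ∂ₓφ existing). Then for all (x,s), √(f)·φ^{n−3}·( (∂ₓ(f φ²)/(φ² f))·∂ₛφ − 2·∂ₓ∂ₛφ ) = 2·m'(s). In particular all terms involving ∂ₛφ cancel and the boundary variational expression reduces to the variation of the mass parameter alone. -/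

import Mathlib

/-!
Write `f = f(m, φ)`. Along `x` the mass is constant, so `∂ₓ(fφ²) = (f_φ φ² + 2φf)·φ√f`; along `s`,
`∂ₛ(φ√f) = ∂ₛφ·√f + φ(f_φ ∂ₛφ + f_m m')/(2√f)`. Substituting both, every `f_φ`-term and every
`∂ₛφ`-term cancels, leaving `−φ^(n−2) f_m m'`, and `f_m = −2/φ^(n−2)`.
-/

/-- The Birmingham metric function, in terms of the areal radius `φ` and the
mass parameter `m`: `f = β − 2m/φ^(n−2) − φ²/ℓ²`. -/
noncomputable def birminghamF (n : ℕ) (ℓ β m φ : ℝ) : ℝ :=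
  β - 2 * m / φ ^ (n - 2) - φ ^ 2 / ℓ ^ 2

noncomputable def birminghamFRadialDeriv (n : ℕ) (ℓ m φ : ℝ) : ℝ :=
  2 * (n - 2 : ℕ) * m / φ ^ (n - 2 + 1) - 2 * φ / ℓ ^ 2

theorem HasDerivAt.birminghamF {M P : ℝ → ℝ} {M' P' s : ℝ} (n : ℕ) (ℓ β : ℝ)
    (hM : HasDerivAt M M' s) (hP : HasDerivAt P P' s) (hP0 : P s ≠ 0) :
    HasDerivAt (fun t => _root_.birminghamF n ℓ β (M t) (P t))
      (birminghamFRadialDeriv n ℓ (M s) (P s) * P' - 2 * M' / P s ^ (n - 2)) s := by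
  unfold _root_.birminghamF birminghamFRadialDeriv
  generalize n - 2 = j
  have hmass := (hM.const_mul 2).fun_div (hP.fun_pow j) (pow_ne_zero _ hP0)
  refine (((hasDerivAt_const s β).sub hmass).sub ((hP.fun_pow 2).div_const (ℓ ^ 2))).congr_deriv ?_
  cases j with
  | zero =>
    simp only [Nat.cast_zero, pow_zero, mul_zero, zero_mul, zero_div, sub_zero, mul_one, div_one]
    ring
  | succ i =>
    rw [Nat.add_sub_cancel]
    field_simp
    ring

theorem boundary_term_algebraic_identity (k : ℕ) {F Fφ P r S V : ℝ}
    (hP : P ≠ 0) (hr : r ≠ 0) (hrF : r ^ 2 = F) :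
    r * P ^ k * ((Fφ * P ^ 2 + F * (2 * P)) * (P * r) / (P ^ 2 * F) * S
        - 2 * (S * r + P * ((Fφ * S + V) / (2 * r)))) = -(P ^ (k + 1) * V) := by
  subst hrF
  field_simp
  ring

theorem boundary_term_cancellation_general (n : ℕ) (hn : 3 ≤ n) (ℓ β a b ε : ℝ)
    (m m' : ℝ → ℝ) (φ φs φxs D : ℝ → ℝ → ℝ)
    (hm : ∀ s ∈ Set.Ioo (-ε) ε, HasDerivAt m (m' s) s)
    (hφpos : ∀ x ∈ Set.Ioo a b, ∀ s ∈ Set.Ioo (-ε) ε, 0 < φ x s)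
    (hfpos : ∀ x ∈ Set.Ioo a b, ∀ s ∈ Set.Ioo (-ε) ε,
      0 < birminghamF n ℓ β (m s) (φ x s))
    (hφx : ∀ x ∈ Set.Ioo a b, ∀ s ∈ Set.Ioo (-ε) ε,
      HasDerivAt (fun x => φ x s)
        (φ x s * Real.sqrt (birminghamF n ℓ β (m s) (φ x s))) x)
    (hφs : ∀ x ∈ Set.Ioo a b, ∀ s ∈ Set.Ioo (-ε) ε,
      HasDerivAt (fun s => φ x s) (φs x s) s)
    (hmix₂ : ∀ x ∈ Set.Ioo a b, ∀ s ∈ Set.Ioo (-ε) ε,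
      HasDerivAt (fun s => φ x s * Real.sqrt (birminghamF n ℓ β (m s) (φ x s)))
        (φxs x s) s)
    (hD : ∀ x ∈ Set.Ioo a b, ∀ s ∈ Set.Ioo (-ε) ε,
      HasDerivAt (fun x => birminghamF n ℓ β (m s) (φ x s) * (φ x s) ^ 2) (D x s) x) :
    ∀ x ∈ Set.Ioo a b, ∀ s ∈ Set.Ioo (-ε) ε,
      Real.sqrt (birminghamF n ℓ β (m s) (φ x s)) * (φ x s) ^ (n - 3) *
          (D x s / ((φ x s) ^ 2 * birminghamF n ℓ β (m s) (φ x s)) * φs x s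
            - 2 * φxs x s)
        = 2 * m' s := by
  intro x hx s hs
  have hP : φ x s ≠ 0 := (hφpos x hx s hs).ne'
  have hf : 0 < birminghamF n ℓ β (m s) (φ x s) := hfpos x hx s hs
  have hφx' := hφx x hx s hs
  have hφs' := hφs x hx s hs
  set P := φ x s
  set f := birminghamF n ℓ β (m s) P
  set fφ := birminghamFRadialDeriv n ℓ (m s) P
  have hDval : D x s = (fφ * P ^ 2 + f * (2 * P)) * (P * √f) := by
    rw [(hD x hx s hs).unique (((hasDerivAt_const x (m s)).birminghamF n ℓ β hφx' hP).mul
      (hφx'.fun_pow 2))]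
    simp only [mul_zero, zero_div, sub_zero, Nat.cast_ofNat, Nat.add_one_sub_one, pow_one]
    ring
  have hφxs :
      φxs x s = φs x s * √f + P * ((fφ * φs x s + -(2 * m' s / P ^ (n - 2))) / (2 * √f)) := by
    rw [(hmix₂ x hx s hs).unique (hφs'.mul (((hm s hs).birminghamF n ℓ β hφs' hP).sqrt hf.ne'))]
    ring
  rw [hDval, hφxs, boundary_term_algebraic_identity (n - 3) hP (Real.sqrt_pos.2 hf).ne'
    (Real.sq_sqrt hf.le), show n - 3 + 1 = n - 2 by omega]
  field_simp

/-- Cancellation in the boundary variational term: with `f = β − 2m(s)/φ^(n−2) − φ²/ℓ²`,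
`f > 0` and `∂ₓφ = φ√f` (and equal mixed partials `∂ₓ∂ₛφ = ∂ₛ∂ₓφ`), one has
`√f·φ^(n−3)·( (∂ₓ(fφ²)/(φ²f))·∂ₛφ − 2·∂ₓ∂ₛφ ) = 2·m'(s)`: all terms involving
`∂ₛφ` cancel and the boundary term reduces to the variation of the mass alone. -/
theorem boundary_term_cancellation (n : ℕ) (hn : 3 ≤ n) (ℓ β a b ε : ℝ)
    (hℓ : 0 < ℓ) (hε : 0 < ε)
    (m m' : ℝ → ℝ) (φ φs φxs D : ℝ → ℝ → ℝ)
    (hm : ∀ s ∈ Set.Ioo (-ε) ε, HasDerivAt m (m' s) s)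
    (hφpos : ∀ x ∈ Set.Ioo a b, ∀ s ∈ Set.Ioo (-ε) ε, 0 < φ x s)
    (hfpos : ∀ x ∈ Set.Ioo a b, ∀ s ∈ Set.Ioo (-ε) ε,
      0 < birminghamF n ℓ β (m s) (φ x s))
    (hφx : ∀ x ∈ Set.Ioo a b, ∀ s ∈ Set.Ioo (-ε) ε,
      HasDerivAt (fun x => φ x s)
        (φ x s * Real.sqrt (birminghamF n ℓ β (m s) (φ x s))) x)
    (hφs : ∀ x ∈ Set.Ioo a b, ∀ s ∈ Set.Ioo (-ε) ε,
      HasDerivAt (fun s => φ x s) (φs x s) s)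
    (hmix₁ : ∀ x ∈ Set.Ioo a b, ∀ s ∈ Set.Ioo (-ε) ε,
      HasDerivAt (fun x => φs x s) (φxs x s) x)
    (hmix₂ : ∀ x ∈ Set.Ioo a b, ∀ s ∈ Set.Ioo (-ε) ε,
      HasDerivAt (fun s => φ x s * Real.sqrt (birminghamF n ℓ β (m s) (φ x s)))
        (φxs x s) s)
    (hD : ∀ x ∈ Set.Ioo a b, ∀ s ∈ Set.Ioo (-ε) ε,
      HasDerivAt (fun x => birminghamF n ℓ β (m s) (φ x s) * (φ x s) ^ 2) (D x s) x) :
    ∀ x ∈ Set.Ioo a b, ∀ s ∈ Set.Ioo (-ε) ε,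
      Real.sqrt (birminghamF n ℓ β (m s) (φ x s)) * (φ x s) ^ (n - 3) *
          (D x s / ((φ x s) ^ 2 * birminghamF n ℓ β (m s) (φ x s)) * φs x s
            - 2 * φxs x s)
        = 2 * m' s :=
  boundary_term_cancellation_general n hn ℓ β a b ε m m' φ φs φxs D hm hφpos hfpos hφx hφs hmix₂ hD
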